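/- arXiv:2411.12533 — 15 statements merged into one kernel-verified Lean document; each statement's English description precedes it below -/
import Mathlib

section
/- In a many-to-one matching market with substitutable and consistent firm choice functions, the set of individually rational matchings that belong to the worker-quasi-core equals the set of worker-quasi-stable matchings. -/
/-- `C` is a choice function: `C T ⊆ T` for every `T`. -/
def ChoiceFun {α : Type} (C : Finset α → Finset α) : Prop := ∀ T, C T ⊆ T

/-- Substitutability: for `T' ⊆ T`, `C T ∩ T' ⊆ C T'`. -/
def Substitutable {α : Type} [DecidableEq α] (C : Finset α → Finset α) : Prop :=
  ∀ T' T : Finset α, T' ⊆ T → C T ∩ T' ⊆ C T'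

/-- Consistency: if `C T ⊆ T' ⊆ T` then `C T' = C T`. -/
def Consistent {α : Type} (C : Finset α → Finset α) : Prop :=
  ∀ T T' : Finset α, C T ⊆ T' → T' ⊆ T → C T' = C T

/-- Blair (weak) order induced by a choice function: `A ⪰ A'` iff `A = C (A ∪ A')`. -/
def blairGE {α : Type} [DecidableEq α] (C : Finset α → Finset α) (A A' : Finset α) : Prop :=
  A = C (A ∪ A')

/-- Blair strict order: `A ≻ A'` iff `A ⪰ A'` and `A ≠ A'`. -/
def blairGT {α : Type} [DecidableEq α] (C : Finset α → Finset α) (A A' : Finset α) : Prop :=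
  blairGE C A A' ∧ A ≠ A'

/-- A many-to-one matching: each firm gets a finite set of workers, each worker at most one
firm (encoded via `Option`), with the compatibility condition `w ∈ μ(f) ↔ μ(w) = {f}`. -/
structure Matching1 (F W : Type) where
  firm : F → Finset W
  worker : W → Option F
  compat : ∀ f w, w ∈ firm f ↔ worker w = some f

/-- Reflexive closure of a worker's strict preference over `Option F`
(`none` encodes `∅`, `some f` encodes `{f}`). -/
def prefGE {F : Type} (p : Option F → Option F → Prop) (a b : Option F) : Prop :=
  p a b ∨ a = b

/-- Individual rationality in the many-to-one market. -/
def IndRational1 {F W : Type} (Cf : F → Finset W → Finset W)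
    (pref : W → Option F → Option F → Prop) (μ : Matching1 F W) : Prop :=
  (∀ f, Cf f (μ.firm f) = μ.firm f) ∧ (∀ w, prefGE (pref w) (μ.worker w) none)

/-- `(f,w)` blocks `μ`. -/
def Blocks1 {F W : Type} [DecidableEq W] (Cf : F → Finset W → Finset W)
    (pref : W → Option F → Option F → Prop) (μ : Matching1 F W) (f : F) (w : W) : Prop :=
  w ∉ μ.firm f ∧ w ∈ Cf f (μ.firm f ∪ {w}) ∧ pref w (some f) (μ.worker w)

/-- `μ'` dominates `μ` via the (nonempty) coalition `SF ∪ SW`. -/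
def Dominates1 {F W : Type} [DecidableEq W] (Cf : F → Finset W → Finset W)
    (pref : W → Option F → Option F → Prop) (μ' μ : Matching1 F W)
    (SF : Finset F) (SW : Finset W) : Prop :=
  μ' ≠ μ ∧ (SF.Nonempty ∨ SW.Nonempty) ∧
  (∀ f ∈ SF, μ'.firm f ⊆ SW) ∧
  (∀ w ∈ SW, ∀ f, μ'.worker w = some f → f ∈ SF) ∧
  (∀ f ∈ SF, blairGE (Cf f) (μ'.firm f) (μ.firm f)) ∧
  (∀ w ∈ SW, prefGE (pref w) (μ'.worker w) (μ.worker w)) ∧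
  ((∃ f ∈ SF, blairGT (Cf f) (μ'.firm f) (μ.firm f)) ∨
   (∃ w ∈ SW, pref w (μ'.worker w) (μ.worker w)))

/-- Worker-quasi-core (many-to-one): whenever `μ'` dominates `μ` via a coalition,
every worker of the coalition whose assignment changes was unemployed at `μ`. -/
def WorkerQuasiCore1 {F W : Type} [DecidableEq W] (Cf : F → Finset W → Finset W)
    (pref : W → Option F → Option F → Prop) (μ : Matching1 F W) : Prop :=
  ∀ (μ' : Matching1 F W) (SF : Finset F) (SW : Finset W),
    Dominates1 Cf pref μ' μ SF SW →
    ∀ w ∈ SW, μ'.worker w ≠ μ.worker w → μ.worker w = none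

/-- Worker-quasi-stability (many-to-one): individually rational and each blocking pair
involves an unemployed worker. -/
def WorkerQuasiStable1 {F W : Type} [DecidableEq W] (Cf : F → Finset W → Finset W)
    (pref : W → Option F → Option F → Prop) (μ : Matching1 F W) : Prop :=
  IndRational1 Cf pref μ ∧ ∀ f w, Blocks1 Cf pref μ f w → μ.worker w = none

/-- in a many-to-one market with substitutable and consistent firm choice
functions, the individually rational matchings in the worker-quasi-core are exactly the
worker-quasi-stable matchings. -/
theorem stmt0 {F W : Type} [DecidableEq F] [DecidableEq W] [Fintype F] [Fintype W]
    (Cf : F → Finset W → Finset W) (pref : W → Option F → Option F → Prop)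
    (hCf : ∀ f, ChoiceFun (Cf f)) (hsub : ∀ f, Substitutable (Cf f))
    (hcons : ∀ f, Consistent (Cf f))
    (hlin : ∀ w, IsStrictTotalOrder (Option F) (pref w))
    (μ : Matching1 F W) :
    (IndRational1 Cf pref μ ∧ WorkerQuasiCore1 Cf pref μ) ↔
      WorkerQuasiStable1 Cf pref μ := by
  constructor
  · rintro ⟨hIR, hcore⟩
    refine ⟨hIR, ?_⟩
    rintro f w ⟨hnotin, hwC, hpref⟩
    classical
    set T : Finset W := Cf f (μ.firm f ∪ {w}) with hT
    have hTsub : T ⊆ μ.firm f ∪ {w} := hCf f _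
    have hwT : w ∈ T := hwC
    -- construct the dominating matching
    let worker' : W → Option F := fun w' =>
      if w' ∈ T then some f else if w' ∈ μ.firm f then none else μ.worker w'
    let μ' : Matching1 F W :=
      { firm := fun g => Finset.univ.filter (fun w' => worker' w' = some g)
        worker := worker'
        compat := by intro g w'; simp [Finset.mem_filter] }
    have hfirm : μ'.firm f = T := by
      ext w'
      simp only [μ', Finset.mem_filter, Finset.mem_univ, true_and, worker']
      by_cases h1 : w' ∈ T
      · simp [h1]
      · by_cases h2 : w' ∈ μ.firm f
        · simp [h1, h2]
        · simp only [h1, h2, if_false, iff_false]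
          intro h
          exact h2 ((μ.compat f w').2 h)
    have hwworker' : μ'.worker w = some f := by
      show worker' w = some f
      simp [worker', hwT]
    have hwμ : μ.worker w ≠ some f := fun h => hnotin ((μ.compat f w).2 h)
    have hblairf : blairGE (Cf f) (μ'.firm f) (μ.firm f) := by
      rw [hfirm]
      show T = Cf f (T ∪ μ.firm f)
      have heq : T ∪ μ.firm f = μ.firm f ∪ {w} := by
        apply Finset.Subset.antisymm
        · exact Finset.union_subset hTsub Finset.subset_union_left
        · apply Finset.union_subset Finset.subset_union_right
          simp [hwT]
      rw [heq, hT]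
    have hdom : Dominates1 Cf pref μ' μ {f} ({} ∪ T) := by
      refine ⟨?_, Or.inl ⟨f, Finset.mem_singleton_self f⟩, ?_, ?_, ?_, ?_, ?_⟩
      · intro h
        rw [h] at hwworker'
        exact hwμ hwworker'
      · intro g hg
        rw [Finset.mem_singleton] at hg
        subst hg
        rw [hfirm]
        simp
      · intro w' hw' g hg
        simp only [Finset.empty_union] at hw'
        have h1 : worker' w' = some f := by simp [worker', hw']
        have h2 : (some f : Option F) = some g := h1.symm.trans hg
        rw [Finset.mem_singleton]
        exact (Option.some_inj.mp h2).symm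
      · intro g hg
        rw [Finset.mem_singleton] at hg
        rw [hg]
        exact hblairf
      · intro w' hw'
        simp only [Finset.empty_union] at hw'
        have h' : μ'.worker w' = some f := by show worker' w' = some f; simp [worker', hw']
        by_cases hww : w' = w
        · subst hww
          rw [h']
          exact Or.inl hpref
        · have hwf : w' ∈ μ.firm f := by
            rcases Finset.mem_union.mp (hTsub hw') with h | h
            · exact h
            · exact absurd (Finset.mem_singleton.mp h) hww
          have : μ.worker w' = some f := (μ.compat f w').1 hwf
          rw [h', this]
          exact Or.inr rfl
      · left
        refine ⟨f, Finset.mem_singleton_self f, hblairf, ?_⟩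
        · rw [hfirm]
          intro h
          exact hnotin (h ▸ hwT)
    have := hcore μ' {f} ({} ∪ T) hdom w (by simpa using hwT)
    apply this
    rw [hwworker']
    exact fun h => hwμ h.symm
  · rintro ⟨hIR, hblock⟩
    refine ⟨hIR, ?_⟩
    rintro μ' SF SW ⟨hne, _, _, hwf, hge, hwge, _⟩ w hw hdiff
    have hstrict : pref w (μ'.worker w) (μ.worker w) := by
      rcases hwge w hw with h | h
      · exact h
      · exact absurd h hdiff
    cases hmu' : μ'.worker w with
    | none =>
      rcases hIR.2 w with h | h
      · exfalso
        rw [hmu'] at hstrict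
        have htrans := (hlin w).trans _ _ _ hstrict h
        exact (hlin w).irrefl _ htrans
      · exact h
    | some f =>
      apply hblock f w
      refine ⟨?_, ?_, ?_⟩
      · intro hin
        have := (μ.compat f w).1 hin
        rw [hmu'] at hdiff
        exact hdiff this.symm
      · have hblair := hge f (hwf w hw f hmu')
        have hwin : w ∈ μ'.firm f := (μ'.compat f w).2 hmu' 
        have hsub' : μ.firm f ∪ {w} ⊆ μ'.firm f ∪ μ.firm f := by
          apply Finset.union_subset Finset.subset_union_right
          simp [hwin]
        have := hsub f (μ.firm f ∪ {w}) (μ'.firm f ∪ μ.firm f) hsub'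
        apply this
        rw [Finset.mem_inter, ← hblair]
        exact ⟨hwin, by simp⟩
      · rw [← hmu']
        exact hstrict
end

section
/- In a many-to-one matching market with substitutable and consistent firm choice functions, the set of individually rational matchings that belong to the firm-quasi-core equals the set of firm-quasi-stable matchings. -/
/-- Firm-quasi-core (many-to-one): whenever `μ'` dominates `μ` via a coalition,
every firm in the coalition keeps all of its workers: `μ(f) ⊆ μ'(f)`. -/
def FirmQuasiCore1 {F W : Type} [DecidableEq W] (Cf : F → Finset W → Finset W)
    (pref : W → Option F → Option F → Prop) (μ : Matching1 F W) : Prop :=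
  ∀ (μ' : Matching1 F W) (SF : Finset F) (SW : Finset W),
    Dominates1 Cf pref μ' μ SF SW →
    ∀ f ∈ SF, μ.firm f ⊆ μ'.firm f

/-- Firm-quasi-stability (many-to-one): individually rational and for each firm `f` and each
`T ⊆ W_f^μ = {w : {f} >_w μ(w)}`, `μ(f) ⊆ C_f(μ(f) ∪ T)`. -/
def FirmQuasiStable1 {F W : Type} [DecidableEq W] (Cf : F → Finset W → Finset W)
    (pref : W → Option F → Option F → Prop) (μ : Matching1 F W) : Prop :=
  IndRational1 Cf pref μ ∧
  ∀ (f : F) (T : Finset W), (∀ w ∈ T, pref w (some f) (μ.worker w)) →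
    μ.firm f ⊆ Cf f (μ.firm f ∪ T)

/-- in a many-to-one market with substitutable and consistent firm choice
functions, the individually rational matchings in the firm-quasi-core are exactly the
firm-quasi-stable matchings. -/
theorem stmt1 {F W : Type} [DecidableEq F] [DecidableEq W] [Fintype F] [Fintype W]
    (Cf : F → Finset W → Finset W) (pref : W → Option F → Option F → Prop)
    (hCf : ∀ f, ChoiceFun (Cf f)) (hsub : ∀ f, Substitutable (Cf f))
    (hcons : ∀ f, Consistent (Cf f))
    (hlin : ∀ w, IsStrictTotalOrder (Option F) (pref w))
    (μ : Matching1 F W) :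
    (IndRational1 Cf pref μ ∧ FirmQuasiCore1 Cf pref μ) ↔
      FirmQuasiStable1 Cf pref μ := by
  constructor
  · rintro ⟨hIR, hcore⟩
    refine ⟨hIR, ?_⟩
    intro f T hT
    set A : Finset W := Cf f (μ.firm f ∪ T) with hA
    by_contra hne
    have hAsub : A ⊆ μ.firm f ∪ T := hCf f _
    -- A = Cf f (A ∪ μ.firm f) by consistency
    have hAeq : Cf f (A ∪ μ.firm f) = A := by
      have h1 : Cf f (μ.firm f ∪ T) ⊆ A ∪ μ.firm f := by
        rw [← hA]; exact Finset.subset_union_left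
      have h2 : A ∪ μ.firm f ⊆ μ.firm f ∪ T := by
        apply Finset.union_subset hAsub Finset.subset_union_left
      exact (hcons f (μ.firm f ∪ T) (A ∪ μ.firm f) h1 h2).trans hA.symm
    classical
    -- construct the dominating matching
    let μ' : Matching1 F W :=
      { firm := fun g => if g = f then A else μ.firm g \ A
        worker := fun w => if w ∈ A then some f else
          if w ∈ μ.firm f then none else μ.worker w
        compat := by
          intro g w
          by_cases hg : g = f
          · rw [hg]
            simp only [if_pos rfl]
            by_cases hw : w ∈ A
            · simp [hw]
            · simp only [hw, if_neg, if_false]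
              by_cases hwf : w ∈ μ.firm f
              · simp [hwf, hw]
              · simp only [hwf, if_false, hw]
                constructor
                · intro h; exact absurd h hw
                · intro h
                  exact absurd ((μ.compat f w).mpr h) hwf
          · simp only [if_neg hg]
            by_cases hw : w ∈ A
            · simp only [hw, if_pos]
              constructor
              · intro h; exact absurd (Finset.mem_sdiff.mp h).2 (by simp [hw])
              · intro h; exact absurd (Option.some_inj.mp h).symm hg
            · simp only [hw, if_neg, if_false]
              by_cases hwf : w ∈ μ.firm f
              · simp only [hwf, if_pos]
                constructor
                · intro h
                  have := (μ.compat g w).mp (Finset.mem_sdiff.mp h).1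
                  have h2 := (μ.compat f w).mp hwf
                  rw [this] at h2
                  exact absurd (Option.some_inj.mp h2) hg
                · intro h; exact absurd h (by simp)
              · simp only [hwf, if_false]
                rw [Finset.mem_sdiff]
                constructor
                · intro h; exact (μ.compat g w).mp h.1
                · intro h; exact ⟨(μ.compat g w).mpr h, hw⟩ }
    have hfirmf : μ'.firm f = A := by simp [μ']
    have hAne : A ≠ μ.firm f := by
      intro h; exact hne (by rw [← h])
    have hdom : Dominates1 Cf pref μ' μ {f} A := by
      refine ⟨?_, Or.inl ⟨f, Finset.mem_singleton_self f⟩, ?_, ?_, ?_, ?_, ?_⟩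
      · intro h
        exact hAne (by rw [← hfirmf, h])
      · intro g hg
        rw [Finset.mem_singleton] at hg; subst hg
        rw [hfirmf]
      · intro w hw g hg
        have : μ'.worker w = some f := by simp [μ', hw]
        rw [this] at hg
        rw [Finset.mem_singleton]
        exact (Option.some_inj.mp hg).symm
      · intro g hg
        rw [Finset.mem_singleton] at hg; subst hg
        rw [hfirmf]
        exact hAeq.symm
      · intro w hw
        have hw' : μ'.worker w = some f := by simp [μ', hw]
        by_cases hwf : w ∈ μ.firm f
        · right
          rw [hw', (μ.compat f w).mp hwf]
        · left
          rw [hw']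
          have : w ∈ T := by
            rcases Finset.mem_union.mp (hAsub hw) with h | h
            · exact absurd h hwf
            · exact h
          exact hT w this
      · left
        exact ⟨f, Finset.mem_singleton_self f, by rw [hfirmf]; exact hAeq.symm, by rw [hfirmf]; exact hAne⟩
    have := hcore μ' {f} A hdom f (Finset.mem_singleton_self f)
    rw [hfirmf] at this
    exact hne this
  · rintro ⟨hIR, hqs⟩
    refine ⟨hIR, ?_⟩
    intro μ' SF SW hdom f hf
    obtain ⟨_, _, hfirms, _, hblair, hworkers, _⟩ := hdom
    have hge := hblair f hf
    set T : Finset W := μ'.firm f \ μ.firm f with hT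
    have hTpref : ∀ w ∈ T, pref w (some f) (μ.worker w) := by
      intro w hw
      obtain ⟨hw1, hw2⟩ := Finset.mem_sdiff.mp hw
      have hwSW : w ∈ SW := hfirms f hf hw1
      have hw' : μ'.worker w = some f := (μ'.compat f w).mp hw1
      rcases hworkers w hwSW with h | h
      · rwa [hw'] at h
      · rw [hw'] at h
        exact absurd ((μ.compat f w).mpr h.symm) hw2
    have key := hqs f T hTpref
    have hunion : μ.firm f ∪ T = μ'.firm f ∪ μ.firm f := by
      rw [hT]
      rw [Finset.union_comm]
      rw [Finset.sdiff_union_self_eq_union]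
    rw [hunion, ← hge] at key
    exact key
end

section
/- In a many-to-many matching market with substitutable and consistent choice functions on both sides, every worker-quasi-stable matching is individually rational and belongs to the worker-quasi-core. -/
/-- A many-to-many matching: each firm gets a finite set of workers and each worker a finite
set of firms, with the compatibility condition `w ∈ μ(f) ↔ f ∈ μ(w)`. -/
structure Matching2 (F W : Type) where
  firm : F → Finset W
  worker : W → Finset F
  compat : ∀ f w, w ∈ firm f ↔ f ∈ worker w

/-- Individual rationality in the many-to-many market. -/
def IndRational2 {F W : Type} (Cf : F → Finset W → Finset W)
    (Cw : W → Finset F → Finset F) (μ : Matching2 F W) : Prop :=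
  (∀ f, Cf f (μ.firm f) = μ.firm f) ∧ (∀ w, Cw w (μ.worker w) = μ.worker w)

/-- `μ'` dominates `μ` via the (nonempty) coalition `SF ∪ SW`. -/
def Dominates2 {F W : Type} [DecidableEq F] [DecidableEq W]
    (Cf : F → Finset W → Finset W) (Cw : W → Finset F → Finset F)
    (μ' μ : Matching2 F W) (SF : Finset F) (SW : Finset W) : Prop :=
  μ' ≠ μ ∧ (SF.Nonempty ∨ SW.Nonempty) ∧
  (∀ f ∈ SF, μ'.firm f ⊆ SW) ∧
  (∀ w ∈ SW, μ'.worker w ⊆ SF) ∧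
  (∀ f ∈ SF, blairGE (Cf f) (μ'.firm f) (μ.firm f)) ∧
  (∀ w ∈ SW, blairGE (Cw w) (μ'.worker w) (μ.worker w)) ∧
  ((∃ f ∈ SF, blairGT (Cf f) (μ'.firm f) (μ.firm f)) ∨
   (∃ w ∈ SW, blairGT (Cw w) (μ'.worker w) (μ.worker w)))

/-- `μ'` setwise dominates `μ` via the (nonempty) coalition `SF ∪ SW`: only the *new*
partners of coalition members are required to belong to the coalition. -/
def SetwiseDominates2 {F W : Type} [DecidableEq F] [DecidableEq W]
    (Cf : F → Finset W → Finset W) (Cw : W → Finset F → Finset F)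
    (μ' μ : Matching2 F W) (SF : Finset F) (SW : Finset W) : Prop :=
  μ' ≠ μ ∧ (SF.Nonempty ∨ SW.Nonempty) ∧
  (∀ f ∈ SF, μ'.firm f \ μ.firm f ⊆ SW) ∧
  (∀ w ∈ SW, μ'.worker w \ μ.worker w ⊆ SF) ∧
  (∀ f ∈ SF, blairGE (Cf f) (μ'.firm f) (μ.firm f)) ∧
  (∀ w ∈ SW, blairGE (Cw w) (μ'.worker w) (μ.worker w)) ∧
  ((∃ f ∈ SF, blairGT (Cf f) (μ'.firm f) (μ.firm f)) ∨
   (∃ w ∈ SW, blairGT (Cw w) (μ'.worker w) (μ.worker w)))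

/-- Worker-quasi-stability: individual rationality plus, for every worker `w` and every set
`K` of firms contained in `F̃_w^μ = {f : w ∈ C_f(μ(f) ∪ {w})}`, `μ(w) ⊆ C_w(μ(w) ∪ K)`. -/
def WorkerQuasiStable2 {F W : Type} [DecidableEq F] [DecidableEq W]
    (Cf : F → Finset W → Finset W) (Cw : W → Finset F → Finset F)
    (μ : Matching2 F W) : Prop :=
  IndRational2 Cf Cw μ ∧
  ∀ (w : W) (K : Finset F), (∀ f ∈ K, w ∈ Cf f (μ.firm f ∪ {w})) →
    μ.worker w ⊆ Cw w (μ.worker w ∪ K)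

/-- Firm-quasi-stability: individual rationality plus, for every firm `f` and every set
`T` of workers contained in `W̃_f^μ = {w : f ∈ C_w(μ(w) ∪ {f})}`, `μ(f) ⊆ C_f(μ(f) ∪ T)`. -/
def FirmQuasiStable2 {F W : Type} [DecidableEq F] [DecidableEq W]
    (Cf : F → Finset W → Finset W) (Cw : W → Finset F → Finset F)
    (μ : Matching2 F W) : Prop :=
  IndRational2 Cf Cw μ ∧
  ∀ (f : F) (T : Finset W), (∀ w ∈ T, f ∈ Cw w (μ.worker w ∪ {f})) →
    μ.firm f ⊆ Cf f (μ.firm f ∪ T)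

/-- `(f,w)` blocks `μ` in the many-to-many market. -/
def Blocks2 {F W : Type} [DecidableEq F] [DecidableEq W]
    (Cf : F → Finset W → Finset W) (Cw : W → Finset F → Finset F)
    (μ : Matching2 F W) (f : F) (w : W) : Prop :=
  w ∉ μ.firm f ∧ w ∈ Cf f (μ.firm f ∪ {w}) ∧ f ∈ Cw w (μ.worker w ∪ {f})

/-- Pairwise stability in the many-to-many market. -/
def PairwiseStable2 {F W : Type} [DecidableEq F] [DecidableEq W]
    (Cf : F → Finset W → Finset W) (Cw : W → Finset F → Finset F)
    (μ : Matching2 F W) : Prop :=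
  IndRational2 Cf Cw μ ∧ ∀ f w, ¬ Blocks2 Cf Cw μ f w

/-- Worker-quasi-core (many-to-many): whenever `μ'` dominates `μ` via a coalition,
every coalition worker keeps all of her firms: `μ(w) ⊆ μ'(w)`. -/
def WorkerQuasiCore2 {F W : Type} [DecidableEq F] [DecidableEq W]
    (Cf : F → Finset W → Finset W) (Cw : W → Finset F → Finset F)
    (μ : Matching2 F W) : Prop :=
  ∀ (μ' : Matching2 F W) (SF : Finset F) (SW : Finset W),
    Dominates2 Cf Cw μ' μ SF SW → ∀ w ∈ SW, μ.worker w ⊆ μ'.worker w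

/-- in a many-to-many market with substitutable and consistent choice
functions on both sides, every worker-quasi-stable matching is individually rational and
belongs to the worker-quasi-core. -/
theorem stmt2 {F W : Type} [DecidableEq F] [DecidableEq W] [Fintype F] [Fintype W]
    (Cf : F → Finset W → Finset W) (Cw : W → Finset F → Finset F)
    (hCf : ∀ f, ChoiceFun (Cf f)) (hsubf : ∀ f, Substitutable (Cf f))
    (hconsf : ∀ f, Consistent (Cf f))
    (hCw : ∀ w, ChoiceFun (Cw w)) (hsubw : ∀ w, Substitutable (Cw w))
    (hconsw : ∀ w, Consistent (Cw w))
    (μ : Matching2 F W) (hq : WorkerQuasiStable2 Cf Cw μ) :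
    IndRational2 Cf Cw μ ∧ WorkerQuasiCore2 Cf Cw μ := by
  obtain ⟨hir, hqs⟩ := hq
  refine ⟨hir, ?_⟩
  intro μ' SF SW hdom w hw
  obtain ⟨_, _, hFS, hWS, hFge, hWge, _⟩ := hdom
  have hK : ∀ f ∈ μ'.worker w, w ∈ Cf f (μ.firm f ∪ {w}) := by
    intro f hf
    have hfS : f ∈ SF := hWS w hw hf
    have hge := hFge f hfS
    have hwμ' : w ∈ μ'.firm f := (μ'.compat f w).2 hf
    have hsub : μ.firm f ∪ {w} ⊆ μ'.firm f ∪ μ.firm f := by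
      intro x hx
      rcases Finset.mem_union.1 hx with h | h
      · exact Finset.mem_union_right _ h
      · simp only [Finset.mem_singleton] at h; subst h
        exact Finset.mem_union_left _ hwμ'
    apply hsubf f _ _ hsub
    refine Finset.mem_inter.2 ⟨?_, ?_⟩
    · rw [← hge]; exact hwμ'
    · simp
  have h1 := hqs w (μ'.worker w) hK
  have h2 := hWge w hw
  unfold blairGE at h2
  rw [Finset.union_comm] at h2
  rw [← h2] at h1
  exact h1
end

section
/- In a many-to-many matching market with substitutable and consistent choice functions on both sides, the worker-quasi-setwise stable set equals the set of worker-quasi-stable matchings. -/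
/-- Worker-quasi-setwise stability: individually rational, and whenever some matching
setwise dominates `μ` via a coalition, every coalition worker keeps all her firms. -/
def WorkerQuasiSetwiseStable2 {F W : Type} [DecidableEq F] [DecidableEq W]
    (Cf : F → Finset W → Finset W) (Cw : W → Finset F → Finset F)
    (μ : Matching2 F W) : Prop :=
  IndRational2 Cf Cw μ ∧
  ∀ (μ' : Matching2 F W) (SF : Finset F) (SW : Finset W),
    SetwiseDominates2 Cf Cw μ' μ SF SW → ∀ w ∈ SW, μ.worker w ⊆ μ'.worker w

section AuxStmt3

variable {F W : Type} [DecidableEq F] [DecidableEq W]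

/-- Auxiliary firm map for the dominating matching in stmt3. -/
def firmAux (Cf : F → Finset W → Finset W) (μ : Matching2 F W) (w : W) (A : Finset F)
    (f : F) : Finset W :=
  if f ∈ A ∧ f ∉ μ.worker w then Cf f (μ.firm f ∪ {w})
  else if f ∈ μ.worker w ∧ f ∉ A then (μ.firm f).erase w
  else μ.firm f

lemma firmAux_subset (Cf : F → Finset W → Finset W) (hCf : ∀ f, ChoiceFun (Cf f))
    (μ : Matching2 F W) (w : W) (A : Finset F) (f : F) :
    firmAux Cf μ w A f ⊆ μ.firm f ∪ {w} := by
  unfold firmAux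
  split_ifs with h1 h2
  · exact hCf f _
  · exact (Finset.erase_subset _ _).trans Finset.subset_union_left
  · exact Finset.subset_union_left

lemma mem_w_firmAux (Cf : F → Finset W → Finset W)
    (μ : Matching2 F W) (w : W) (A : Finset F)
    (hA : ∀ f ∈ A, f ∉ μ.worker w → w ∈ Cf f (μ.firm f ∪ {w})) (f : F) :
    w ∈ firmAux Cf μ w A f ↔ f ∈ A := by
  unfold firmAux
  split_ifs with h1 h2
  · exact iff_of_true (hA f h1.1 h1.2) h1.1
  · simp [Finset.mem_erase, h2.2]
  · constructor
    · intro hw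
      have hfw := (μ.compat f w).mp hw
      by_contra hc; exact h2 ⟨hfw, hc⟩
    · intro hfA
      have hfw : f ∈ μ.worker w := by
        by_contra hc; exact h1 ⟨hfA, hc⟩
      exact (μ.compat f w).mpr hfw

/-- Auxiliary worker map for the dominating matching in stmt3. -/
def workerAux (Cf : F → Finset W → Finset W) (μ : Matching2 F W) (w : W) (A : Finset F)
    (v : W) : Finset F :=
  if v = w then A else (μ.worker v).filter (fun f => v ∈ firmAux Cf μ w A f)

lemma auxCompat (Cf : F → Finset W → Finset W) (hCf : ∀ f, ChoiceFun (Cf f))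
    (μ : Matching2 F W) (w : W) (A : Finset F)
    (hA : ∀ f ∈ A, f ∉ μ.worker w → w ∈ Cf f (μ.firm f ∪ {w})) :
    ∀ f v, v ∈ firmAux Cf μ w A f ↔ f ∈ workerAux Cf μ w A v := by
  intro f v
  unfold workerAux
  by_cases hv : v = w
  · subst hv; rw [if_pos rfl]; exact mem_w_firmAux Cf μ v A hA f
  · rw [if_neg hv, Finset.mem_filter]
    constructor
    · intro h
      refine ⟨?_, h⟩
      rcases Finset.mem_union.mp (firmAux_subset Cf hCf μ w A f h) with h' | h'
      · exact (μ.compat f v).mp h'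
      · exact absurd (Finset.mem_singleton.mp h') hv
    · exact fun h => h.2

end AuxStmt3

/-- in a many-to-many market with substitutable and consistent choice
functions on both sides, the worker-quasi-setwise stable set equals the set of
worker-quasi-stable matchings. -/
theorem stmt3 {F W : Type} [DecidableEq F] [DecidableEq W] [Fintype F] [Fintype W]
    (Cf : F → Finset W → Finset W) (Cw : W → Finset F → Finset F)
    (hCf : ∀ f, ChoiceFun (Cf f)) (hsubf : ∀ f, Substitutable (Cf f))
    (hconsf : ∀ f, Consistent (Cf f))
    (hCw : ∀ w, ChoiceFun (Cw w)) (hsubw : ∀ w, Substitutable (Cw w))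
    (hconsw : ∀ w, Consistent (Cw w))
    (μ : Matching2 F W) :
    WorkerQuasiSetwiseStable2 Cf Cw μ ↔ WorkerQuasiStable2 Cf Cw μ := by
  constructor
  · -- worker-quasi-setwise stable → worker-quasi-stable
    rintro ⟨hIR, hdom⟩
    refine ⟨hIR, ?_⟩
    intro w K hK
    by_contra hnot
    set A := Cw w (μ.worker w ∪ K) with hAdef
    have hAsub : A ⊆ μ.worker w ∪ K := hCw w _
    have hA : ∀ f ∈ A, f ∉ μ.worker w → w ∈ Cf f (μ.firm f ∪ {w}) := by
      intro f hf hfw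
      rcases Finset.mem_union.mp (hAsub hf) with h | h
      · exact absurd h hfw
      · exact hK f h
    set μ' : Matching2 F W := ⟨firmAux Cf μ w A, workerAux Cf μ w A,
      auxCompat Cf hCf μ w A hA⟩ with hμ'
    have hw'A : μ'.worker w = A := if_pos rfl
    have hAne : A ≠ μ.worker w := fun h => hnot (le_of_eq h.symm)
    have hbw : blairGE (Cw w) (μ'.worker w) (μ.worker w) := by
      rw [blairGE, hw'A]
      have h1 : Cw w (μ.worker w ∪ K) ⊆ A ∪ μ.worker w := by
        rw [← hAdef]; exact Finset.subset_union_left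
      have h2 : A ∪ μ.worker w ⊆ μ.worker w ∪ K :=
        Finset.union_subset hAsub Finset.subset_union_left
      rw [hconsw w (μ.worker w ∪ K) (A ∪ μ.worker w) h1 h2]
    have hdomi : SetwiseDominates2 Cf Cw μ' μ (A \ μ.worker w) {w} := by
      refine ⟨?_, Or.inr ⟨w, Finset.mem_singleton_self w⟩, ?_, ?_, ?_, ?_, ?_⟩
      · intro h
        exact hAne (hw'A ▸ congrArg (fun m => m.worker w) h)
      · intro f hf v hv
        rcases Finset.mem_sdiff.mp hv with ⟨hv1, hv2⟩
        rcases Finset.mem_union.mp (firmAux_subset Cf hCf μ w A f hv1) with h | h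
        · exact absurd h hv2
        · exact h
      · intro v hv
        rw [Finset.mem_singleton.mp hv, hw'A]
      · intro f hf
        rcases Finset.mem_sdiff.mp hf with ⟨hfA, hfn⟩
        have hval : μ'.firm f = Cf f (μ.firm f ∪ {w}) := if_pos ⟨hfA, hfn⟩
        rw [blairGE]
        have h1 : Cf f (μ.firm f ∪ {w}) ⊆ μ'.firm f ∪ μ.firm f := by
          rw [hval]; exact Finset.subset_union_left
        have h2 : μ'.firm f ∪ μ.firm f ⊆ μ.firm f ∪ {w} :=
          Finset.union_subset (firmAux_subset Cf hCf μ w A f) Finset.subset_union_left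
        rw [hconsf f (μ.firm f ∪ {w}) (μ'.firm f ∪ μ.firm f) h1 h2, hval]
      · intro v hv
        rw [Finset.mem_singleton.mp hv]; exact hbw
      · exact Or.inr ⟨w, Finset.mem_singleton_self w, hbw, by rw [hw'A]; exact hAne⟩
    have := hdom μ' (A \ μ.worker w) {w} hdomi w (Finset.mem_singleton_self w)
    rw [hw'A] at this
    exact hnot this
  · -- worker-quasi-stable → worker-quasi-setwise stable
    rintro ⟨hIR, hqs⟩
    refine ⟨hIR, ?_⟩
    rintro μ' SF SW ⟨hne, hS, hF, hW, hbF, hbW, hstr⟩ w hw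
    have hbw : μ'.worker w = Cw w (μ'.worker w ∪ μ.worker w) := hbW w hw
    have hKF : ∀ f ∈ μ'.worker w \ μ.worker w, w ∈ Cf f (μ.firm f ∪ {w}) := by
      intro f hf
      have hfSF : f ∈ SF := hW w hw hf
      have hbf : μ'.firm f = Cf f (μ'.firm f ∪ μ.firm f) := hbF f hfSF
      have hwf : w ∈ μ'.firm f := (μ'.compat f w).mpr (Finset.mem_sdiff.mp hf).1
      have hsubset : μ.firm f ∪ {w} ⊆ μ'.firm f ∪ μ.firm f := by
        apply Finset.union_subset Finset.subset_union_right
        intro x hx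
        rw [Finset.mem_singleton.mp hx]
        exact Finset.mem_union_left _ hwf
      apply hsubf f (μ.firm f ∪ {w}) (μ'.firm f ∪ μ.firm f) hsubset
      rw [Finset.mem_inter]
      refine ⟨?_, by simp⟩
      rw [← hbf]; exact hwf
    have h1 := hqs w (μ'.worker w \ μ.worker w) hKF
    have h2 : μ.worker w ∪ (μ'.worker w \ μ.worker w) = μ'.worker w ∪ μ.worker w := by
      ext f
      simp only [Finset.mem_union, Finset.mem_sdiff]
      tauto
    rw [h2, ← hbw] at h1
    exact h1
end

section
/- In a many-to-many matching market with substitutable and consistent choice functions on both sides, every matching that is both worker-quasi-stable and firm-quasi-stable is either pairwise stable or is dominated by another matching via some coalition (i.e., it lies outside the core). -/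
/-- in a many-to-many market with substitutable and consistent choice
functions on both sides, every matching that is both worker-quasi-stable and
firm-quasi-stable is either pairwise stable or dominated by another matching via some
coalition (i.e. it lies outside the core). -/
theorem stmt4 {F W : Type} [DecidableEq F] [DecidableEq W] [Fintype F] [Fintype W]
    (Cf : F → Finset W → Finset W) (Cw : W → Finset F → Finset F)
    (hCf : ∀ f, ChoiceFun (Cf f)) (hsubf : ∀ f, Substitutable (Cf f))
    (hconsf : ∀ f, Consistent (Cf f))
    (hCw : ∀ w, ChoiceFun (Cw w)) (hsubw : ∀ w, Substitutable (Cw w))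
    (hconsw : ∀ w, Consistent (Cw w))
    (μ : Matching2 F W)
    (hwq : WorkerQuasiStable2 Cf Cw μ) (hfq : FirmQuasiStable2 Cf Cw μ) :
    PairwiseStable2 Cf Cw μ ∨
      ∃ (μ' : Matching2 F W) (SF : Finset F) (SW : Finset W),
        Dominates2 Cf Cw μ' μ SF SW := by
  by_cases hps : PairwiseStable2 Cf Cw μ
  · exact Or.inl hps
  right
  obtain ⟨hIRf, hIRw⟩ := hwq.1
  have hwqs := hwq.2
  have hfqs := hfq.2
  have hblock : ∃ f w, Blocks2 Cf Cw μ f w := by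
    by_contra h
    push_neg at h
    exact hps ⟨⟨hIRf, hIRw⟩, h⟩
  obtain ⟨f, w, hwnm, hwC, hfC⟩ := hblock
  have hfirm : Cf f (μ.firm f ∪ {w}) = μ.firm f ∪ {w} := by
    apply Finset.Subset.antisymm (hCf f _)
    apply Finset.union_subset
    · refine hfqs f {w} ?_
      intro x hx
      rw [Finset.mem_singleton] at hx
      subst hx; exact hfC
    · simpa using hwC
  have hworker : Cw w (μ.worker w ∪ {f}) = μ.worker w ∪ {f} := by
    apply Finset.Subset.antisymm (hCw w _)
    apply Finset.union_subset
    · refine hwqs w {f} ?_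
      intro x hx
      rw [Finset.mem_singleton] at hx
      subst hx; exact hwC
    · simpa using hfC
  refine ⟨{ firm := fun g => if g = f then μ.firm f ∪ {w} else μ.firm g
            worker := fun v => if v = w then μ.worker w ∪ {f} else μ.worker v
            compat := ?_ }, Finset.univ, Finset.univ, ?_, ?_, ?_, ?_, ?_, ?_, ?_⟩
  · intro g v
    by_cases hg : g = f <;> by_cases hv : v = w <;>
      simp [hg, hv, ← μ.compat, Finset.mem_union] <;> tauto
  · -- μ' ≠ μ
    intro h
    apply hwnm
    have := congrArg (fun m => w ∈ Matching2.firm m f) h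
    simpa using this
  · exact Or.inl ⟨f, Finset.mem_univ f⟩
  · intro g _; exact Finset.subset_univ _
  · intro v _; exact Finset.subset_univ _
  · intro g _
    by_cases hg : g = f
    · subst hg
      unfold blairGE
      dsimp only
      rw [if_pos rfl, Finset.union_right_comm, Finset.union_self]
      exact hfirm.symm
    · simp only [if_neg hg, blairGE, Finset.union_self]
      exact (hIRf g).symm
  · intro v _
    by_cases hv : v = w
    · subst hv
      unfold blairGE
      dsimp only
      rw [if_pos rfl, Finset.union_right_comm, Finset.union_self]
      exact hworker.symm
    · simp only [if_neg hv, blairGE, Finset.union_self]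
      exact (hIRw v).symm
  · refine Or.inl ⟨f, Finset.mem_univ f, ?_, ?_⟩
    · change (if f = f then μ.firm f ∪ {w} else μ.firm f) =
        Cf f ((if f = f then μ.firm f ∪ {w} else μ.firm f) ∪ μ.firm f)
      rw [if_pos rfl, Finset.union_right_comm, Finset.union_self]
      exact hfirm.symm
    · simp only [if_pos rfl]
      intro h
      apply hwnm
      rw [← h]
      simp
end

section
/- Let C be a choice function on subsets of a finite set X (C(T) ⊆ T for all T) satisfying substitutability and consistency. Then C satisfies path independence: C(T ∪ T') = C(C(T) ∪ T') for all subsets T, T' of X. -/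
/-- a substitutable and consistent choice function on subsets of a finite set
satisfies path independence: `C(T ∪ T') = C(C(T) ∪ T')`. -/
theorem stmt5 {X : Type} [DecidableEq X] [Fintype X]
    (C : Finset X → Finset X) (hC : ChoiceFun C)
    (hsub : Substitutable C) (hcons : Consistent C) :
    ∀ T T' : Finset X, C (T ∪ T') = C (C T ∪ T') := by
  intro T T'
  have h1 : C (T ∪ T') ⊆ C T ∪ T' := by
    intro x hx
    by_cases hx' : x ∈ T'
    · exact Finset.mem_union_right _ hx'
    · have hxT : x ∈ T := by
        rcases Finset.mem_union.mp (hC _ hx) with h | h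
        · exact h
        · exact absurd h hx'
      exact Finset.mem_union_left _
        (hsub T (T ∪ T') Finset.subset_union_left (Finset.mem_inter.mpr ⟨hx, hxT⟩))
  have h2 : C T ∪ T' ⊆ T ∪ T' :=
    Finset.union_subset_union (hC T) (Finset.Subset.refl _)
  exact (hcons (T ∪ T') (C T ∪ T') h1 h2).symm
end

section
/- In a many-to-one matching market with substitutable and consistent firm choice functions, if μ is an individually rational matching and (f,w') is a blocking pair of μ, then there exist a matching μ' and a nonempty coalition S such that μ' dominates μ via S, w' ∈ S, and μ'(w') = {f} ≠ μ(w'); moreover μ' can be chosen with μ'(f) = C_f(μ(f) ∪ {w'}). -/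
/-- if `μ` is individually rational and `(f,w')` blocks `μ`, then there are a
matching `μ'` and a nonempty coalition `S` such that `μ'` dominates `μ` via `S`, `w' ∈ S`,
`μ'(w') = {f} ≠ μ(w')`; moreover `μ'` can be chosen with `μ'(f) = C_f(μ(f) ∪ {w'})`. -/
theorem stmt8 {F W : Type} [DecidableEq F] [DecidableEq W] [Fintype F] [Fintype W]
    (Cf : F → Finset W → Finset W) (pref : W → Option F → Option F → Prop)
    (hCf : ∀ f, ChoiceFun (Cf f)) (hsub : ∀ f, Substitutable (Cf f))
    (hcons : ∀ f, Consistent (Cf f))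
    (hlin : ∀ w, IsStrictTotalOrder (Option F) (pref w))
    (μ : Matching1 F W) (hIR : IndRational1 Cf pref μ)
    (f : F) (w' : W) (hblock : Blocks1 Cf pref μ f w') :
    ∃ (μ' : Matching1 F W) (SF : Finset F) (SW : Finset W),
      Dominates1 Cf pref μ' μ SF SW ∧ w' ∈ SW ∧
      μ'.worker w' = some f ∧ μ'.worker w' ≠ μ.worker w' ∧
      μ'.firm f = Cf f (μ.firm f ∪ {w'}) := by
  classical
  obtain ⟨hwf, hwA, hpref⟩ := hblock
  set A := Cf f (μ.firm f ∪ {w'}) with hA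
  have hAsub : A ⊆ μ.firm f ∪ {w'} := hCf f _
  have hne : μ.worker w' ≠ some f := by
    intro h; rw [h] at hpref; exact (hlin w').irrefl _ hpref
  -- membership facts
  have hmemf : ∀ w, w ∈ μ.firm f ↔ μ.worker w = some f := fun w => μ.compat f w
  refine ⟨⟨fun g => if g = f then A else (μ.firm g).erase w',
          fun w => if w ∈ A then some f else if μ.worker w = some f then none else μ.worker w,
          ?_⟩, {f}, A, ?_, hwA, ?_, ?_, ?_⟩
  · -- compat
    intro g w
    by_cases hg : g = f
    · subst hg
      simp only [if_pos rfl]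
      by_cases hwA' : w ∈ A
      · simp [hwA']
      · simp only [if_neg hwA']
        constructor
        · intro h; exact absurd h hwA'
        · intro h
          by_cases hwf2 : μ.worker w = some g
          · rw [if_pos hwf2] at h; exact absurd h (by simp)
          · rw [if_neg hwf2] at h; exact absurd h hwf2
    · simp only [if_neg hg]
      by_cases hwA' : w ∈ A
      · by_cases hwe : w = w'
        · subst hwe
          constructor
          · intro h; exact absurd rfl (Finset.mem_erase.mp h).1
          · intro h
            rw [if_pos hwA'] at h
            exact absurd (Option.some.inj h) (fun e => hg e.symm)
        have hwor : μ.worker w = some f := by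
          rcases Finset.mem_union.mp (hAsub hwA') with h | h
          · exact (hmemf w).mp h
          · exact absurd (Finset.mem_singleton.mp h) hwe
        constructor
        · intro h
          have := (μ.compat g w).mp (Finset.mem_of_mem_erase h)
          rw [hwor] at this
          exact absurd (Option.some.inj this) (fun e => hg e.symm)
        · intro h
          rw [if_pos hwA'] at h
          exact absurd (Option.some.inj h) (fun e => hg e.symm)
      · have hwne : w ≠ w' := fun e => hwA' (e ▸ hwA)
        rw [if_neg hwA']
        by_cases hwf2 : μ.worker w = some f
        · rw [if_pos hwf2]
          constructor
          · intro h
            have := (μ.compat g w).mp (Finset.mem_of_mem_erase h)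
            rw [hwf2] at this
            exact absurd (Option.some.inj this) (fun e => hg e.symm)
          · intro h; exact absurd h (by simp)
        · rw [if_neg hwf2]
          constructor
          · intro h; exact (μ.compat g w).mp (Finset.mem_of_mem_erase h)
          · intro h; exact Finset.mem_erase.mpr ⟨hwne, (μ.compat g w).mpr h⟩
  · -- Dominates1
    refine ⟨?_, Or.inl ⟨f, Finset.mem_singleton_self f⟩, ?_, ?_, ?_, ?_, ?_⟩
    · intro h
      have hw := congrArg Matching1.worker h
      have : (if w' ∈ A then some f else if μ.worker w' = some f then none else μ.worker w') = μ.worker w' := congrFun hw w'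
      rw [if_pos hwA] at this
      exact hne this.symm
    · intro g hg
      have : g = f := Finset.mem_singleton.mp hg
      subst this
      simp only [if_pos rfl]
      exact fun x hx => hx
    · intro w hw g hg
      simp only [if_pos hw] at hg
      exact Finset.mem_singleton.mpr (Option.some.inj hg).symm
    · intro g hg
      have : g = f := Finset.mem_singleton.mp hg
      subst this
      show blairGE (Cf g) (if g = g then A else (μ.firm g).erase w') (μ.firm g)
      rw [if_pos rfl]
      unfold blairGE
      have hU : A ∪ μ.firm g = μ.firm g ∪ {w'} := by
        apply Finset.Subset.antisymm
        · exact Finset.union_subset (hAsub.trans (by rw [Finset.union_comm])) Finset.subset_union_left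
        · apply Finset.union_subset Finset.subset_union_right
          intro x hx
          have : x = w' := Finset.mem_singleton.mp hx
          subst this
          exact Finset.mem_union_left _ hwA
      rw [hU]
    · intro w hw
      simp only [if_pos hw]
      by_cases hwe : w = w'
      · subst hwe; exact Or.inl hpref
      · have hwor : μ.worker w = some f := by
          rcases Finset.mem_union.mp (hAsub hw) with h | h
          · exact (hmemf w).mp h
          · exact absurd (Finset.mem_singleton.mp h) hwe
        exact Or.inr hwor.symm
    · refine Or.inr ⟨w', hwA, ?_⟩
      simp only [if_pos hwA]
      exact hpref
  · simp only [if_pos hwA]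
  · simp only [if_pos hwA]
    exact fun h => hne h.symm
  · show (if f = f then A else (μ.firm f).erase w') = A
    rw [if_pos rfl]
end

section
/- In a many-to-one matching market with substitutable and consistent firm choice functions, suppose μ is an individually rational matching, μ' is a matching that dominates μ via a coalition S, and w ∈ S is a worker with μ'(w) ≠ μ(w). Then there exists a firm f ∈ S such that μ'(w) = {f}, {f} >_w μ(w), and (f,w) is a blocking pair of μ. -/
/-- if `μ` is individually rational, `μ'` dominates `μ` via a coalition, and
`w` is a coalition worker with `μ'(w) ≠ μ(w)`, then there is a coalition firm `f` with
`μ'(w) = {f}`, `{f} >_w μ(w)`, and `(f,w)` is a blocking pair of `μ`. -/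
theorem stmt9 {F W : Type} [DecidableEq F] [DecidableEq W] [Fintype F] [Fintype W]
    (Cf : F → Finset W → Finset W) (pref : W → Option F → Option F → Prop)
    (hCf : ∀ f, ChoiceFun (Cf f)) (hsub : ∀ f, Substitutable (Cf f))
    (hcons : ∀ f, Consistent (Cf f))
    (hlin : ∀ w, IsStrictTotalOrder (Option F) (pref w))
    (μ μ' : Matching1 F W) (hIR : IndRational1 Cf pref μ)
    (SF : Finset F) (SW : Finset W) (hdom : Dominates1 Cf pref μ' μ SF SW)
    (w : W) (hw : w ∈ SW) (hne : μ'.worker w ≠ μ.worker w) :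
    ∃ f ∈ SF, μ'.worker w = some f ∧ pref w (some f) (μ.worker w) ∧
      Blocks1 Cf pref μ f w := by
  obtain ⟨hneq, hNE, hcoal, hWF, hBf, hBw, hstr⟩ := hdom
  have hpw : pref w (μ'.worker w) (μ.worker w) := by
    rcases hBw w hw with h | h
    · exact h
    · exact absurd h hne
  haveI := hlin w
  cases h : μ'.worker w with
  | none =>
    rw [h] at hpw hne
    rcases hIR.2 w with h2 | h2
    · exact absurd (trans_of (pref w) hpw h2) (irrefl_of (pref w) none)
    · exact absurd h2.symm hne
  | some f =>
    rw [h] at hpw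
    have hfS : f ∈ SF := hWF w hw f h
    have hwμ' : w ∈ μ'.firm f := (μ'.compat f w).2 h
    have hwnot : w ∉ μ.firm f := fun hm =>
      hne (h.trans ((μ.compat f w).1 hm).symm)
    have hB := hBf f hfS
    have hwin : w ∈ Cf f (μ'.firm f ∪ μ.firm f) := hB ▸ hwμ'
    have hss : μ.firm f ∪ {w} ⊆ μ'.firm f ∪ μ.firm f :=
      Finset.union_subset Finset.subset_union_right
        (Finset.singleton_subset_iff.2 (Finset.mem_union_left _ hwμ'))
    have hblock : w ∈ Cf f (μ.firm f ∪ {w}) :=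
      hsub f _ _ hss (Finset.mem_inter.2 ⟨hwin,
        Finset.mem_union_right _ (Finset.mem_singleton_self w)⟩)
    exact ⟨f, hfS, rfl, hpw, hwnot, hblock, hpw⟩
end

section
/- In a many-to-one matching market with substitutable and consistent firm choice functions, let μ be an individually rational matching, f a firm, and T a nonempty subset of W_f^μ with C_f(μ(f) ∪ T) ≠ μ(f). Then there exist a matching μ' and a nonempty coalition S such that μ' dominates μ via S, f ∈ S, and μ'(f) = C_f(μ(f) ∪ T). -/
/-- if `μ` is individually rational, `T` is a nonempty subset of
`W_f^μ = {w : {f} >_w μ(w)}` with `C_f(μ(f) ∪ T) ≠ μ(f)`, then there are a matching `μ'`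
and a nonempty coalition `S` such that `μ'` dominates `μ` via `S`, `f ∈ S`, and
`μ'(f) = C_f(μ(f) ∪ T)`. -/
theorem stmt10 {F W : Type} [DecidableEq F] [DecidableEq W] [Fintype F] [Fintype W]
    (Cf : F → Finset W → Finset W) (pref : W → Option F → Option F → Prop)
    (hCf : ∀ f, ChoiceFun (Cf f)) (hsub : ∀ f, Substitutable (Cf f))
    (hcons : ∀ f, Consistent (Cf f))
    (hlin : ∀ w, IsStrictTotalOrder (Option F) (pref w))
    (μ : Matching1 F W) (hIR : IndRational1 Cf pref μ)
    (f : F) (T : Finset W) (hTne : T.Nonempty)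
    (hT : ∀ w ∈ T, pref w (some f) (μ.worker w))
    (hchange : Cf f (μ.firm f ∪ T) ≠ μ.firm f) :
    ∃ (μ' : Matching1 F W) (SF : Finset F) (SW : Finset W),
      Dominates1 Cf pref μ' μ SF SW ∧ f ∈ SF ∧
      μ'.firm f = Cf f (μ.firm f ∪ T) := by
  classical
  set A := Cf f (μ.firm f ∪ T) with hA
  have hAsub : A ⊆ μ.firm f ∪ T := hCf f _
  have hAcons : Cf f (A ∪ μ.firm f) = A := by
    rw [hA]
    exact hcons f (μ.firm f ∪ T) (A ∪ μ.firm f) Finset.subset_union_left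
      (Finset.union_subset hAsub Finset.subset_union_left)
  let μ' : Matching1 F W :=
    { firm := fun g => if g = f then A else μ.firm g \ A
      worker := fun w => if w ∈ A then some f else if w ∈ μ.firm f then none else μ.worker w
      compat := by
        intro g w
        by_cases hg : g = f
        · rw [hg]
          by_cases hw : w ∈ A
          · simp [hw]
          · simp only [if_pos rfl, if_neg hw]
            constructor
            · intro h; exact absurd h hw
            · by_cases hwf : w ∈ μ.firm f
              · simp [hwf]
              · simp only [if_neg hwf]
                intro h
                exact absurd ((μ.compat f w).mpr h) hwf
        · simp only [if_neg hg, Finset.mem_sdiff]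
          by_cases hw : w ∈ A
          · simp only [if_pos hw]
            constructor
            · rintro ⟨-, h⟩; exact absurd hw h
            · intro h; exact absurd (Option.some_injective _ h).symm hg
          · simp only [if_neg hw]
            by_cases hwf : w ∈ μ.firm f
            · simp only [if_pos hwf]
              constructor
              · rintro ⟨hwg, -⟩
                have := ((μ.compat g w).mp hwg).symm.trans ((μ.compat f w).mp hwf)
                exact absurd (Option.some_injective _ this) hg
              · intro h; exact absurd h (by simp)
            · simp only [if_neg hwf]
              constructor
              · rintro ⟨hwg, -⟩; exact (μ.compat g w).mp hwg
              · intro h; exact ⟨(μ.compat g w).mpr h, hw⟩ }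
  have hμ'f : μ'.firm f = A := if_pos rfl
  refine ⟨μ', {f}, A, ⟨?_, Or.inl ⟨f, Finset.mem_singleton_self f⟩, ?_, ?_, ?_, ?_, ?_⟩,
    Finset.mem_singleton_self f, hμ'f⟩
  · intro h
    apply hchange
    rw [← hμ'f, h]
  · intro g hg
    rw [Finset.mem_singleton] at hg; subst hg
    rw [hμ'f]
  · intro w hw g hgw
    have : μ'.worker w = some f := if_pos hw
    rw [this] at hgw
    rw [Finset.mem_singleton]
    exact (Option.some_injective _ hgw).symm
  · intro g hg
    rw [Finset.mem_singleton] at hg; subst hg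
    rw [hμ'f]
    exact hAcons.symm
  · intro w hw
    have hw' : μ'.worker w = some f := if_pos hw
    rw [hw']
    by_cases hwf : w ∈ μ.firm f
    · right; exact ((μ.compat f w).mp hwf).symm
    · left
      have : w ∈ T := (Finset.mem_union.mp (hAsub hw)).resolve_left hwf
      exact hT w this
  · refine Or.inl ⟨f, Finset.mem_singleton_self f, ?_, ?_⟩
    · rw [hμ'f]; exact hAcons.symm
    · rw [hμ'f, hA]; exact hchange
end

section
/- In a many-to-many matching market with substitutable and consistent choice functions on both sides, if μ is an individually rational matching, μ' is a matching that dominates μ via a coalition S, and w ∈ S is a worker, then μ'(w) \ μ(w) ⊆ F̃_w^μ. -/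
/-- if `μ` is individually rational, `μ'` dominates `μ` via a coalition, and
`w` is a coalition worker, then `μ'(w) \ μ(w) ⊆ F̃_w^μ = {f : w ∈ C_f(μ(f) ∪ {w})}`. -/
theorem stmt13 {F W : Type} [DecidableEq F] [DecidableEq W] [Fintype F] [Fintype W]
    (Cf : F → Finset W → Finset W) (Cw : W → Finset F → Finset F)
    (hCf : ∀ f, ChoiceFun (Cf f)) (hsubf : ∀ f, Substitutable (Cf f))
    (hconsf : ∀ f, Consistent (Cf f))
    (hCw : ∀ w, ChoiceFun (Cw w)) (hsubw : ∀ w, Substitutable (Cw w))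
    (hconsw : ∀ w, Consistent (Cw w))
    (μ μ' : Matching2 F W) (hIR : IndRational2 Cf Cw μ)
    (SF : Finset F) (SW : Finset W) (hdom : Dominates2 Cf Cw μ' μ SF SW)
    (w : W) (hw : w ∈ SW) :
    ∀ f ∈ μ'.worker w \ μ.worker w, w ∈ Cf f (μ.firm f ∪ {w}) := by
  intro f hf
  obtain ⟨hne, hS, hF, hW, hgeF, hgeW, hstr⟩ := hdom
  rw [Finset.mem_sdiff] at hf
  have hfS : f ∈ SF := hW w hw hf.1
  have hge := hgeF f hfS
  have hwμ' : w ∈ μ'.firm f := (μ'.compat f w).2 hf.1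
  have hwC : w ∈ Cf f (μ'.firm f ∪ μ.firm f) := by rw [← hge]; exact hwμ'
  have hsub : μ.firm f ∪ {w} ⊆ μ'.firm f ∪ μ.firm f := by
    apply Finset.union_subset (Finset.subset_union_right)
    simpa using Finset.mem_union_left _ hwμ'
  exact hsubf f _ _ hsub (Finset.mem_inter.2 ⟨hwC, by simp⟩)
end

section
/- In a many-to-many matching market with substitutable and consistent choice functions on both sides, let μ be an individually rational matching, w a worker, and K ⊆ F̃_w^μ a set of firms with μ(w) ⊄ C_w(μ(w) ∪ K). Then there exist a matching μ' and a nonempty coalition S such that μ' setwise dominates μ via S, w ∈ S, μ'(w) = C_w(μ(w) ∪ K), and μ(w) ⊄ μ'(w). -/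
/-- if `μ` is individually rational, `K ⊆ F̃_w^μ` and
`μ(w) ⊄ C_w(μ(w) ∪ K)`, then there are a matching `μ'` and a nonempty coalition `S` such
that `μ'` setwise dominates `μ` via `S`, `w ∈ S`, `μ'(w) = C_w(μ(w) ∪ K)` and
`μ(w) ⊄ μ'(w)`. -/
theorem stmt14 {F W : Type} [DecidableEq F] [DecidableEq W] [Fintype F] [Fintype W]
    (Cf : F → Finset W → Finset W) (Cw : W → Finset F → Finset F)
    (hCf : ∀ f, ChoiceFun (Cf f)) (hsubf : ∀ f, Substitutable (Cf f))
    (hconsf : ∀ f, Consistent (Cf f))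
    (hCw : ∀ w, ChoiceFun (Cw w)) (hsubw : ∀ w, Substitutable (Cw w))
    (hconsw : ∀ w, Consistent (Cw w))
    (μ : Matching2 F W) (hIR : IndRational2 Cf Cw μ)
    (w : W) (K : Finset F) (hK : ∀ f ∈ K, w ∈ Cf f (μ.firm f ∪ {w}))
    (hns : ¬ μ.worker w ⊆ Cw w (μ.worker w ∪ K)) :
    ∃ (μ' : Matching2 F W) (SF : Finset F) (SW : Finset W),
      SetwiseDominates2 Cf Cw μ' μ SF SW ∧ w ∈ SW ∧
      μ'.worker w = Cw w (μ.worker w ∪ K) ∧ ¬ μ.worker w ⊆ μ'.worker w := by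
  classical
  set A : Finset F := Cw w (μ.worker w ∪ K) with hA
  have hAsub : A ⊆ μ.worker w ∪ K := hCw w _
  -- target firm sets
  set B : F → Finset W := fun f =>
    if f ∈ A \ μ.worker w then Cf f (μ.firm f ∪ {w})
    else if f ∈ μ.worker w \ A then μ.firm f \ {w}
    else μ.firm f with hB
  have hKmem : ∀ f ∈ A \ μ.worker w, f ∈ K := by
    intro f hf
    rcases Finset.mem_sdiff.1 hf with ⟨hfA, hfm⟩
    rcases Finset.mem_union.1 (hAsub hfA) with h | h
    · exact absurd h hfm
    · exact h
  have hwB : ∀ f, w ∈ B f ↔ f ∈ A := by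
    intro f
    simp only [hB]
    by_cases h1 : f ∈ A \ μ.worker w
    · simp only [if_pos h1]
      constructor
      · intro _; exact (Finset.mem_sdiff.1 h1).1
      · intro _; exact hK f (hKmem f h1)
    · simp only [if_neg h1]
      by_cases h2 : f ∈ μ.worker w \ A
      · simp only [if_pos h2]
        constructor
        · intro hc; exact absurd (Finset.mem_sdiff.1 hc).2 (by simp)
        · intro hc; exact absurd hc (Finset.mem_sdiff.1 h2).2
      · simp only [if_neg h2]
        rw [μ.compat]
        constructor
        · intro hfw
          by_contra hfA
          exact h2 (Finset.mem_sdiff.mpr ⟨hfw, hfA⟩)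
        · intro hfA
          by_contra hfw
          exact h1 (Finset.mem_sdiff.mpr ⟨hfA, hfw⟩)
  set μ' : Matching2 F W :=
    { firm := B
      worker := fun w' => if w' = w then A else Finset.univ.filter (fun f => w' ∈ B f)
      compat := by
        intro f w'
        by_cases hw' : w' = w
        · subst hw'
          simp only [if_pos rfl]
          exact hwB f
        · simp only [if_neg hw', Finset.mem_filter, Finset.mem_univ, true_and] } with hmu'
  have hmu'w : μ'.worker w = A := by simp [hmu']
  have hAne : A ≠ μ.worker w := by
    intro h; exact hns (h ▸ Finset.Subset.refl _)
  have hblairw : blairGE (Cw w) A (μ.worker w) := by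
    have h1 : A ⊆ A ∪ μ.worker w := Finset.subset_union_left
    have h2 : A ∪ μ.worker w ⊆ μ.worker w ∪ K := by
      intro x hx
      rcases Finset.mem_union.1 hx with h | h
      · exact hAsub h
      · exact Finset.mem_union_left _ h
    have := hconsw w (μ.worker w ∪ K) (A ∪ μ.worker w) (by rw [← hA]; exact h1) h2
    exact (this.trans hA.symm).symm
  refine ⟨μ', A \ μ.worker w, {w}, ⟨?_, Or.inr ⟨w, Finset.mem_singleton_self w⟩, ?_, ?_, ?_, ?_, ?_⟩, Finset.mem_singleton_self w, hmu'w, ?_⟩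
  · -- μ' ≠ μ
    intro h
    apply hAne
    rw [← hmu'w, h]
  · -- new partners of firms in SF are in {w}
    intro f hf
    intro x hx
    rcases Finset.mem_sdiff.1 hx with ⟨hx1, hx2⟩
    have hx1' : x ∈ Cf f (μ.firm f ∪ {w}) := by
      simpa only [hmu', hB, if_pos hf] using hx1
    have := hCf f (μ.firm f ∪ {w}) hx1'
    rcases Finset.mem_union.1 this with h | h
    · exact absurd h hx2
    · exact h
  · -- new partners of w in SF
    intro w' hw'
    rw [Finset.mem_singleton] at hw'
    subst hw'
    rw [hmu'w]
  · -- blairGE for firms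
    intro f hf
    have hBf : μ'.firm f = Cf f (μ.firm f ∪ {w}) := by
      simp only [hmu', hB, if_pos hf]
    rw [hBf]
    have hsub1 : Cf f (μ.firm f ∪ {w}) ⊆ Cf f (μ.firm f ∪ {w}) ∪ μ.firm f :=
      Finset.subset_union_left
    have hsub2 : Cf f (μ.firm f ∪ {w}) ∪ μ.firm f ⊆ μ.firm f ∪ {w} := by
      intro x hx
      rcases Finset.mem_union.1 hx with h | h
      · exact hCf f _ h
      · exact Finset.mem_union_left _ h
    exact (hconsf f (μ.firm f ∪ {w}) _ hsub1 hsub2).symm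
  · -- blairGE for w
    intro w' hw'
    rw [Finset.mem_singleton] at hw'
    subst hw'
    rw [hmu'w]
    exact hblairw
  · -- strict improvement
    refine Or.inr ⟨w, Finset.mem_singleton_self w, ?_⟩
    rw [hmu'w]
    exact ⟨hblairw, hAne⟩
  · -- μ(w) ⊄ μ'(w)
    rw [hmu'w]
    exact hns
end

section
/- In a many-to-many matching market with substitutable and consistent choice functions on both sides, if μ is an individually rational matching, μ' is a matching that setwise dominates μ via a coalition S, and w ∈ S is a worker, then μ'(w) \ μ(w) ⊆ F̃_w^μ. -/
/-- if `μ` is individually rational, `μ'` setwise dominates `μ` via a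
coalition, and `w` is a coalition worker, then
`μ'(w) \ μ(w) ⊆ F̃_w^μ = {f : w ∈ C_f(μ(f) ∪ {w})}`. -/
theorem stmt15 {F W : Type} [DecidableEq F] [DecidableEq W] [Fintype F] [Fintype W]
    (Cf : F → Finset W → Finset W) (Cw : W → Finset F → Finset F)
    (hCf : ∀ f, ChoiceFun (Cf f)) (hsubf : ∀ f, Substitutable (Cf f))
    (hconsf : ∀ f, Consistent (Cf f))
    (hCw : ∀ w, ChoiceFun (Cw w)) (hsubw : ∀ w, Substitutable (Cw w))
    (hconsw : ∀ w, Consistent (Cw w))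
    (μ μ' : Matching2 F W) (hIR : IndRational2 Cf Cw μ)
    (SF : Finset F) (SW : Finset W) (hdom : SetwiseDominates2 Cf Cw μ' μ SF SW)
    (w : W) (hw : w ∈ SW) :
    ∀ f ∈ μ'.worker w \ μ.worker w, w ∈ Cf f (μ.firm f ∪ {w}) := by
  intro f hf
  have hfS : f ∈ SF := hdom.2.2.2.1 w hw hf
  obtain ⟨hf', hfn⟩ := Finset.mem_sdiff.mp hf
  have hge := hdom.2.2.2.2.1 f hfS
  have hwμ' : w ∈ μ'.firm f := (μ'.compat f w).mpr hf'
  have hsub : μ.firm f ∪ {w} ⊆ μ'.firm f ∪ μ.firm f := by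
    intro x hx
    rcases Finset.mem_union.mp hx with h | h
    · exact Finset.mem_union_right _ h
    · have hx : x = w := Finset.mem_singleton.mp h
      exact Finset.mem_union_left _ (hx ▸ hwμ')
  have : w ∈ Cf f (μ'.firm f ∪ μ.firm f) := hge ▸ hwμ'
  exact hsubf f _ _ hsub (Finset.mem_inter.mpr ⟨this, Finset.mem_union_right _ (Finset.mem_singleton_self w)⟩)
end

section
/- In a many-to-many matching market with substitutable and consistent choice functions on both sides, if μ is both worker-quasi-stable and firm-quasi-stable and (f,w) is a blocking pair of μ, then C_w(μ(w) ∪ {f}) = μ(w) ∪ {f} and C_f(μ(f) ∪ {w}) = μ(f) ∪ {w}. -/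
/-- if `μ` is both worker-quasi-stable and firm-quasi-stable and `(f,w)` is a
blocking pair of `μ`, then `C_w(μ(w) ∪ {f}) = μ(w) ∪ {f}` and
`C_f(μ(f) ∪ {w}) = μ(f) ∪ {w}`. -/
theorem stmt16 {F W : Type} [DecidableEq F] [DecidableEq W] [Fintype F] [Fintype W]
    (Cf : F → Finset W → Finset W) (Cw : W → Finset F → Finset F)
    (hCf : ∀ f, ChoiceFun (Cf f)) (hsubf : ∀ f, Substitutable (Cf f))
    (hconsf : ∀ f, Consistent (Cf f))
    (hCw : ∀ w, ChoiceFun (Cw w)) (hsubw : ∀ w, Substitutable (Cw w))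
    (hconsw : ∀ w, Consistent (Cw w))
    (μ : Matching2 F W)
    (hwq : WorkerQuasiStable2 Cf Cw μ) (hfq : FirmQuasiStable2 Cf Cw μ)
    (f : F) (w : W) (hblock : Blocks2 Cf Cw μ f w) :
    Cw w (μ.worker w ∪ {f}) = μ.worker w ∪ {f} ∧
    Cf f (μ.firm f ∪ {w}) = μ.firm f ∪ {w} := by
  obtain ⟨-, hwf, hfw⟩ := hblock
  constructor
  · apply Finset.Subset.antisymm (hCw w _)
    apply Finset.union_subset
    · exact hwq.2 w {f} (by simpa using hwf)
    · simpa using hfw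
  · apply Finset.Subset.antisymm (hCf f _)
    apply Finset.union_subset
    · exact hfq.2 f {w} (by simpa using hfw)
    · simpa using hwf
end

section
/- In a many-to-many matching market with substitutable and consistent choice functions on both sides, suppose μ is both worker-quasi-stable and firm-quasi-stable and (f,w) is a blocking pair of μ. Define μ' by μ'(w) = μ(w) ∪ {f}, μ'(f) = μ(f) ∪ {w}, and μ'(a) = μ(a) for all other agents a. Then μ' is an individually rational matching and μ' dominates μ via the coalition F ∪ W; in particular μ is not in the core. -/
/-- if `μ` is both worker-quasi-stable and firm-quasi-stable and `(f,w)` is a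
blocking pair of `μ`, then the matching `μ'` obtained from `μ` by adding the link `(f,w)`
(and leaving all other agents unchanged) is individually rational and dominates `μ` via the
coalition `F ∪ W`; in particular `μ` is not in the core. -/
theorem stmt17 {F W : Type} [DecidableEq F] [DecidableEq W] [Fintype F] [Fintype W]
    (Cf : F → Finset W → Finset W) (Cw : W → Finset F → Finset F)
    (hCf : ∀ f, ChoiceFun (Cf f)) (hsubf : ∀ f, Substitutable (Cf f))
    (hconsf : ∀ f, Consistent (Cf f))
    (hCw : ∀ w, ChoiceFun (Cw w)) (hsubw : ∀ w, Substitutable (Cw w))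
    (hconsw : ∀ w, Consistent (Cw w))
    (μ : Matching2 F W)
    (hwq : WorkerQuasiStable2 Cf Cw μ) (hfq : FirmQuasiStable2 Cf Cw μ)
    (f : F) (w : W) (hblock : Blocks2 Cf Cw μ f w) :
    (∃ μ' : Matching2 F W,
      μ'.worker w = μ.worker w ∪ {f} ∧ μ'.firm f = μ.firm f ∪ {w} ∧
      (∀ w' : W, w' ≠ w → μ'.worker w' = μ.worker w') ∧
      (∀ f' : F, f' ≠ f → μ'.firm f' = μ.firm f') ∧
      IndRational2 Cf Cw μ' ∧
      Dominates2 Cf Cw μ' μ (Finset.univ : Finset F) (Finset.univ : Finset W)) ∧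
    (∃ (μ'' : Matching2 F W) (SF : Finset F) (SW : Finset W),
      Dominates2 Cf Cw μ'' μ SF SW) := by
  obtain ⟨hwnf, hwCf, hfCw⟩ := hblock
  obtain ⟨⟨hIRf, hIRw⟩, hwq2⟩ := hwq
  obtain ⟨_, hfq2⟩ := hfq
  -- new matching
  set μ' : Matching2 F W :=
    { firm := fun f' => if f' = f then μ.firm f ∪ {w} else μ.firm f'
      worker := fun w' => if w' = w then μ.worker w ∪ {f} else μ.worker w'
      compat := by
        intro f' w'
        by_cases hf : f' = f <;> by_cases hw : w' = w <;>
          simp [hf, hw, μ.compat f w', μ.compat f' w, μ.compat f' w'] }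
    with hμ'
  have hfirmf : μ'.firm f = μ.firm f ∪ {w} := by simp [hμ']
  have hworkw : μ'.worker w = μ.worker w ∪ {f} := by simp [hμ']
  have hfirm' : ∀ f' : F, f' ≠ f → μ'.firm f' = μ.firm f' := by
    intro f' h; simp [hμ', h]
  have hwork' : ∀ w' : W, w' ≠ w → μ'.worker w' = μ.worker w' := by
    intro w' h; simp [hμ', h]
  -- IR of μ' at f
  have hCff : Cf f (μ.firm f ∪ {w}) = μ.firm f ∪ {w} := by
    apply Finset.Subset.antisymm (hCf f _)
    intro x hx
    rcases Finset.mem_union.1 hx with hx | hx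
    · exact hfq2 f {w} (by intro w' hw'; simp at hw'; subst hw'; exact hfCw) hx
    · simp at hx; subst hx; exact hwCf
  have hCww : Cw w (μ.worker w ∪ {f}) = μ.worker w ∪ {f} := by
    apply Finset.Subset.antisymm (hCw w _)
    intro x hx
    rcases Finset.mem_union.1 hx with hx | hx
    · exact hwq2 w {f} (by intro f' hf'; simp at hf'; subst hf'; exact hwCf) hx
    · simp at hx; subst hx; exact hfCw
  have hIR' : IndRational2 Cf Cw μ' := by
    constructor
    · intro f'
      by_cases h : f' = f
      · subst h; rw [hfirmf]; exact hCff
      · rw [hfirm' f' h]; exact hIRf f'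
    · intro w'
      by_cases h : w' = w
      · subst h; rw [hworkw]; exact hCww
      · rw [hwork' w' h]; exact hIRw w'
  have hne : μ' ≠ μ := by
    intro h
    apply hwnf
    have : μ'.firm f = μ.firm f := by rw [h]
    rw [hfirmf] at this
    rw [← this]; simp
  have hdom : Dominates2 Cf Cw μ' μ (Finset.univ : Finset F) (Finset.univ : Finset W) := by
    refine ⟨hne, Or.inl ⟨f, Finset.mem_univ f⟩, fun _ _ => Finset.subset_univ _,
      fun _ _ => Finset.subset_univ _, ?_, ?_, ?_⟩
    · intro f' _
      by_cases h : f' = f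
      · rw [h]
        show μ'.firm f = Cf f (μ'.firm f ∪ μ.firm f)
        rw [hfirmf]
        rw [show μ.firm f ∪ {w} ∪ μ.firm f = μ.firm f ∪ {w} by
          rw [Finset.union_comm (μ.firm f) {w}, Finset.union_assoc]; simp]
        exact hCff.symm
      · show μ'.firm f' = Cf f' (μ'.firm f' ∪ μ.firm f')
        rw [hfirm' f' h, Finset.union_self]
        exact (hIRf f').symm
    · intro w' _
      by_cases h : w' = w
      · rw [h]
        show μ'.worker w = Cw w (μ'.worker w ∪ μ.worker w)
        rw [hworkw]
        rw [show μ.worker w ∪ {f} ∪ μ.worker w = μ.worker w ∪ {f} by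
          rw [Finset.union_comm (μ.worker w) {f}, Finset.union_assoc]; simp]
        exact hCww.symm
      · show μ'.worker w' = Cw w' (μ'.worker w' ∪ μ.worker w')
        rw [hwork' w' h, Finset.union_self]
        exact (hIRw w').symm
    · left
      refine ⟨f, Finset.mem_univ f, ?_, ?_⟩
      · show μ'.firm f = Cf f (μ'.firm f ∪ μ.firm f)
        rw [hfirmf]
        rw [show μ.firm f ∪ {w} ∪ μ.firm f = μ.firm f ∪ {w} by
          rw [Finset.union_comm (μ.firm f) {w}, Finset.union_assoc]; simp]
        exact hCff.symm
      · rw [hfirmf]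
        intro h
        apply hwnf
        rw [← h]; simp
  exact ⟨⟨μ', hworkw, hfirmf, hwork', hfirm', hIR', hdom⟩, μ', _, _, hdom⟩
end

section
/- There exists a many-to-many matching market, with three firms and three workers whose choice functions are substitutable and consistent, together with an individually rational matching μ that is undominated (belongs to the core) and worker-quasi-stable, but is neither firm-quasi-stable nor pairwise stable. -/
set_option maxRecDepth 1000000
set_option synthInstance.maxSize 4000
set_option synthInstance.maxHeartbeats 1000000
set_option maxHeartbeats 4000000

namespace Stmt19Aux

def cf : Fin 3 → Finset (Fin 3) → Finset (Fin 3)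
  | 0 => fun T => if (0:Fin 3) ∈ T then {0} else if (1:Fin 3) ∈ T then {1} else ∅
  | 1 => fun T => T ∩ {0,1}
  | _ => fun _ => ∅

def cw : Fin 3 → Finset (Fin 3) → Finset (Fin 3)
  | 0 => fun T => T ∩ {0,1}
  | 1 => fun T => T ∩ {0,1}
  | _ => fun _ => ∅

def mf : Fin 3 → Finset (Fin 3) := ![{1}, {0,1}, ∅]
def mw : Fin 3 → Finset (Fin 3) := ![{1}, {0,1}, ∅]

def wk (g : Fin 3 → Finset (Fin 3)) (w : Fin 3) : Finset (Fin 3) :=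
  Finset.univ.filter (fun f => w ∈ g f)

theorem key : ∀ (g : Fin 3 → Finset (Fin 3)) (SF : Finset (Fin 3)),
    (∀ f ∈ SF, g f = cf f (g f ∪ mf f)) →
    ∀ SW : Finset (Fin 3),
    (∀ w ∈ SW, wk g w = cw w (wk g w ∪ mw w)) →
    (SF.Nonempty ∨ SW.Nonempty) →
    (∀ f ∈ SF, g f ⊆ SW) →
    (∀ w ∈ SW, wk g w ⊆ SF) →
    ((∃ f ∈ SF, g f ≠ mf f) ∨ (∃ w ∈ SW, wk g w ≠ mw w)) → False := by
  decide

end Stmt19Aux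

open Stmt19Aux in
/-- there is a many-to-many market with three firms and three workers, all
choice functions substitutable and consistent, and an individually rational matching `μ`
that is undominated (in the core) and worker-quasi-stable, but neither firm-quasi-stable
nor pairwise stable. -/
theorem stmt19 :
    ∃ (Cf : Fin 3 → Finset (Fin 3) → Finset (Fin 3))
      (Cw : Fin 3 → Finset (Fin 3) → Finset (Fin 3)),
      (∀ f, ChoiceFun (Cf f)) ∧ (∀ f, Substitutable (Cf f)) ∧ (∀ f, Consistent (Cf f)) ∧
      (∀ w, ChoiceFun (Cw w)) ∧ (∀ w, Substitutable (Cw w)) ∧ (∀ w, Consistent (Cw w)) ∧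
      ∃ μ : Matching2 (Fin 3) (Fin 3),
        IndRational2 Cf Cw μ ∧
        (¬ ∃ (μ' : Matching2 (Fin 3) (Fin 3)) (SF SW : Finset (Fin 3)),
          Dominates2 Cf Cw μ' μ SF SW) ∧
        WorkerQuasiStable2 Cf Cw μ ∧
        ¬ FirmQuasiStable2 Cf Cw μ ∧
        ¬ PairwiseStable2 Cf Cw μ := by
  refine ⟨cf, cw,
    (by decide : ∀ f (T : Finset (Fin 3)), cf f T ⊆ T),
    (by decide : ∀ f (T' T : Finset (Fin 3)), T' ⊆ T → cf f T ∩ T' ⊆ cf f T'),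
    (by decide : ∀ f (T T' : Finset (Fin 3)), cf f T ⊆ T' → T' ⊆ T → cf f T' = cf f T),
    (by decide : ∀ w (T : Finset (Fin 3)), cw w T ⊆ T),
    (by decide : ∀ w (T' T : Finset (Fin 3)), T' ⊆ T → cw w T ∩ T' ⊆ cw w T'),
    (by decide : ∀ w (T T' : Finset (Fin 3)), cw w T ⊆ T' → T' ⊆ T → cw w T' = cw w T),
    ⟨mf, mw, by decide⟩, ⟨by decide, by decide⟩, ?_, ⟨⟨by decide, by decide⟩, by decide⟩,
    ?_, ?_⟩
  · rintro ⟨μ', SF, SW, hne, hcoal, hfsub, hwsub, hgef, hgew, hstrict⟩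
    have hw : ∀ w, μ'.worker w = wk μ'.firm w := by
      intro w
      ext f
      simp [wk, μ'.compat f w]
    refine key μ'.firm SF (fun f hf => hgef f hf) SW
      (fun w hwS => by simpa [hw w, blairGE] using hgew w hwS) hcoal hfsub
      (fun w hwS => by simpa [hw w] using hwsub w hwS) ?_
    rcases hstrict with ⟨f, hf, _, hne'⟩ | ⟨w, hwS, _, hne'⟩
    · exact Or.inl ⟨f, hf, hne'⟩
    · exact Or.inr ⟨w, hwS, by simpa [hw w] using hne'⟩
  · rintro ⟨_, h⟩
    exact (by decide : ¬ ∀ (f : Fin 3) (T : Finset (Fin 3)),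
      (∀ w ∈ T, f ∈ cw w (mw w ∪ {f})) → mf f ⊆ cf f (mf f ∪ T)) h
  · rintro ⟨_, h⟩
    exact h 0 0 ⟨by decide, by decide, by decide⟩
end
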